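/- (Uniform Lipschitz-type bound used in Lemma 1.) Consider N agents with finite nonempty action sets A_i, payoff y : A → ℝ on A = ∏ A_i, and joint value Q_tot : A × ℝ^d → ℝ with q ↦ Q_tot(a;q) continuously differentiable for each a, where q ∈ ℝ^d consists of the local value coordinates q_{i,b}. Let K ⊆ ℝ^d be a compact set and δ > 0 be such that for every q ∈ K and every agent i, q_i has a strict maximizer with gap at least δ (i.e. q_{i,g_i(q)} − q_{i,b} ≥ δ for all b ≠ g_i(q)). Then the gradients of the softmax-weighted losses are uniformly bounded on K over small temperatures: sup_{τ ∈ (0,1]} sup_{q ∈ K} ‖∇_q L_τ(q)‖ < ∞. -/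

import Mathlib

/-!
The only singular quantity as `τ → 0` is the factor `τ⁻¹` in the derivative of a softmax: in
direction `w` it is `τ⁻¹ ∑_b π(b₀) π(b) (w b₀ - w b)`. Under a gap `δ`, every product `π(b₀) π(b)`
with `b ≠ b₀` contains a non-greedy probability, which is at most `exp (-δ/τ) ≤ τ/δ`; this absorbs
the `τ⁻¹`. So the gradient of the joint policy is bounded by `∑ᵢ 2 |Aᵢ| / δ` uniformly in `τ`, and
the product rule together with bounds on `|y - Q_tot|` and `‖∇Q_tot‖` over the compact `K`
bounds the gradient of every summand of the loss.
-/

/-- Softmax policy with temperature `τ` on a finite action set `A`. -/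
noncomputable def softmax {A : Type*} [Fintype A] (τ : ℝ) (q : A → ℝ) (a : A) : ℝ :=
  Real.exp (q a / τ) / ∑ b : A, Real.exp (q b / τ)

open ContinuousLinearMap

lemma Real.exp_neg_le_inv {x : ℝ} (hx : 0 < x) : Real.exp (-x) ≤ x⁻¹ := by
  rw [← one_div, le_div_iff₀ hx, mul_comm]
  exact (Real.mul_exp_neg_le_exp_neg_one x).trans (Real.exp_le_one_iff.2 (by norm_num))

lemma ContinuousLinearMap.norm_proj_le_one {𝕜 ι : Type*} [NontriviallyNormedField 𝕜] [Fintype ι]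
    {E : ι → Type*} [∀ i, SeminormedAddCommGroup (E i)] [∀ i, NormedSpace 𝕜 (E i)] (i : ι) :
    ‖(proj i : ((i : ι) → E i) →L[𝕜] E i)‖ ≤ 1 :=
  opNorm_le_bound _ zero_le_one fun x => by simpa using norm_le_pi_norm x i

section Calculus

variable {𝕜 E : Type*} [NontriviallyNormedField 𝕜] [NormedAddCommGroup E] [NormedSpace 𝕜 E]

lemma norm_fderiv_sum_le {ι F : Type*} [NormedAddCommGroup F] [NormedSpace 𝕜 F] {u : Finset ι}
    {f : ι → E → F} {x : E} (hf : ∀ i ∈ u, DifferentiableAt 𝕜 (f i) x) :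
    ‖fderiv 𝕜 (fun y => ∑ i ∈ u, f i y) x‖ ≤ ∑ i ∈ u, ‖fderiv 𝕜 (f i) x‖ := by
  rw [fderiv_fun_sum hf]
  exact norm_sum_le _ _

lemma norm_fderiv_finsetProd_le {ι : Type*} {u : Finset ι} {g : ι → E → 𝕜} {x : E}
    (hg : ∀ i ∈ u, DifferentiableAt 𝕜 (g i) x) (hle : ∀ i ∈ u, ‖g i x‖ ≤ 1) :
    ‖fderiv 𝕜 (fun y => ∏ i ∈ u, g i y) x‖ ≤ ∑ i ∈ u, ‖fderiv 𝕜 (g i) x‖ := by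
  classical
  rw [fderiv_finsetProd hg]
  refine (norm_sum_le _ _).trans (Finset.sum_le_sum fun i _ => ?_)
  rw [norm_smul, norm_prod]
  exact mul_le_of_le_one_left (norm_nonneg _)
    (Finset.prod_le_one (fun _ _ => norm_nonneg _) fun j hj => hle j (Finset.mem_of_mem_erase hj))

lemma norm_fderiv_mul_le {f h : E → 𝕜} {x : E} (hf : DifferentiableAt 𝕜 f x)
    (hh : DifferentiableAt 𝕜 h x) :
    ‖fderiv 𝕜 (fun y => f y * h y) x‖ ≤ ‖f x‖ * ‖fderiv 𝕜 h x‖ + ‖h x‖ * ‖fderiv 𝕜 f x‖ := by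
  rw [fderiv_fun_mul hf hh, ← norm_smul, ← norm_smul]
  exact norm_add_le _ _

end Calculus

section RealCalculus

variable {E : Type*} [NormedAddCommGroup E] [NormedSpace ℝ E]

lemma norm_fderiv_const_sub_sq_le {g : E → ℝ} {x : E} (hg : DifferentiableAt ℝ g x) (c : ℝ) :
    ‖fderiv ℝ (fun y => (c - g y) ^ 2) x‖ ≤ 2 * |c - g x| * ‖fderiv ℝ g x‖ := by
  rw [((hg.hasFDerivAt.const_sub c).pow 2).fderiv, norm_smul, norm_neg]
  simp

lemma norm_fderiv_mul_const_sub_sq_le {f g : E → ℝ} {x : E} {c B M M' : ℝ}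
    (hf : DifferentiableAt ℝ f x) (hg : DifferentiableAt ℝ g x) (hf₁ : ‖f x‖ ≤ 1)
    (hf' : ‖fderiv ℝ f x‖ ≤ B) (hM : |c - g x| ≤ M) (hg' : ‖fderiv ℝ g x‖ ≤ M') :
    ‖fderiv ℝ (fun y => f y * (c - g y) ^ 2) x‖ ≤ 2 * M * M' + M ^ 2 * B := by
  have hM₀ : 0 ≤ M := (abs_nonneg _).trans hM
  calc _ ≤ ‖f x‖ * ‖fderiv ℝ (fun y => (c - g y) ^ 2) x‖ + ‖(c - g x) ^ 2‖ * ‖fderiv ℝ f x‖ :=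
        norm_fderiv_mul_le hf (((differentiableAt_const c).sub hg).pow 2)
    _ ≤ 1 * (2 * M * M') + M ^ 2 * B := by
        rw [norm_pow, Real.norm_eq_abs (c - g x)]
        gcongr
        exact (norm_fderiv_const_sub_sq_le hg c).trans (by gcongr)
    _ = 2 * M * M' + M ^ 2 * B := by ring

end RealCalculus

lemma IsCompact.exists_bound_of_continuousOn_finite_family {X ι E : Type*} [TopologicalSpace X]
    [Fintype ι] [SeminormedAddCommGroup E] {K : Set X} (hK : IsCompact K) {f : ι → X → E}
    (hf : ∀ i, ContinuousOn (f i) K) : ∃ C, ∀ i, ∀ x ∈ K, ‖f i x‖ ≤ C := by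
  obtain ⟨C, hC⟩ := hK.exists_bound_of_continuousOn (f := fun x i => f i x) (continuousOn_pi.2 hf)
  exact ⟨C, fun i x hx => (norm_le_pi_norm (fun i => f i x) i).trans (hC x hx)⟩

section Softmax

variable {B : Type*} [Fintype B]

lemma softmax_nonneg (τ : ℝ) (v : B → ℝ) (b : B) : 0 ≤ softmax τ v b := by
  unfold softmax
  positivity

lemma softmax_le_one (τ : ℝ) (v : B → ℝ) (b : B) : softmax τ v b ≤ 1 :=
  div_le_one_of_le₀ (Finset.single_le_sum (fun c _ => (Real.exp_pos (v c / τ)).le)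
    (Finset.mem_univ b)) (by positivity)

lemma norm_softmax_le_one (τ : ℝ) (v : B → ℝ) (b : B) : ‖softmax τ v b‖ ≤ 1 := by
  rw [Real.norm_of_nonneg (softmax_nonneg τ v b)]
  exact softmax_le_one τ v b

lemma softmax_le_div_of_add_le {τ δ : ℝ} (hτ : 0 < τ) (hδ : 0 < δ) {v : B → ℝ} {b g : B}
    (hgap : v b + δ ≤ v g) : softmax τ v b ≤ τ / δ :=
  calc softmax τ v b ≤ Real.exp (v b / τ) / Real.exp (v g / τ) :=
        div_le_div_of_nonneg_left (Real.exp_pos _).le (Real.exp_pos _)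
          (Finset.single_le_sum (fun c _ => (Real.exp_pos (v c / τ)).le) (Finset.mem_univ g))
    _ = Real.exp (-((v g - v b) / τ)) := by rw [← Real.exp_sub]; ring_nf
    _ ≤ Real.exp (-(δ / τ)) := by gcongr; linarith
    _ ≤ (δ / τ)⁻¹ := Real.exp_neg_le_inv (by positivity)
    _ = τ / δ := inv_div _ _

lemma softmax_mul_softmax_le_of_gap {τ δ : ℝ} (hτ : 0 < τ) (hδ : 0 < δ) {v : B → ℝ} {g : B}
    (hgap : ∀ b ≠ g, v b + δ ≤ v g) {b b' : B} (hb : b ≠ b') :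
    softmax τ v b * softmax τ v b' ≤ τ / δ := by
  rcases eq_or_ne b g with rfl | hbg
  · exact (mul_le_of_le_one_left (softmax_nonneg τ v b') (softmax_le_one τ v b)).trans
      (softmax_le_div_of_add_le hτ hδ (hgap b' hb.symm))
  · exact (mul_le_of_le_one_right (softmax_nonneg τ v b) (softmax_le_one τ v b')).trans
      (softmax_le_div_of_add_le hτ hδ (hgap b hbg))

variable {ι : Type*} [Fintype ι]

-- Stated for a reindexing `σ` so that it applies directly to one agent's block `q ⟨i, ·⟩`.
lemma hasFDerivAt_softmax_comp (τ : ℝ) (σ : B → ι) (x : ι → ℝ) (b₀ : B) :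
    HasFDerivAt (fun x : ι → ℝ => softmax τ (fun b => x (σ b)) b₀)
      (τ⁻¹ • ∑ b, (softmax τ (fun b => x (σ b)) b₀ * softmax τ (fun b => x (σ b)) b) •
        ((proj (σ b₀) : (ι → ℝ) →L[ℝ] ℝ) - proj (σ b))) x := by
  have : Nonempty B := ⟨b₀⟩
  have hS : 0 < ∑ c, Real.exp (x (σ c) * τ⁻¹) := by positivity
  have hexp (b : B) : HasFDerivAt (fun x : ι → ℝ => Real.exp (x (σ b) * τ⁻¹))
      (Real.exp (x (σ b) * τ⁻¹) • τ⁻¹ • (proj (σ b) : (ι → ℝ) →L[ℝ] ℝ)) x :=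
    ((proj (σ b) : (ι → ℝ) →L[ℝ] ℝ).hasFDerivAt.mul_const τ⁻¹).exp
  have hinv := (hasDerivAt_inv hS.ne').comp_hasFDerivAt x (HasFDerivAt.fun_sum fun b _ => hexp b)
  have hfun : (fun x : ι → ℝ => softmax τ (fun b => x (σ b)) b₀) =
      fun x => Real.exp (x (σ b₀) * τ⁻¹) * (∑ c, Real.exp (x (σ c) * τ⁻¹))⁻¹ := by
    funext x
    simp only [softmax, div_eq_mul_inv]
  rw [hfun]
  refine ((hexp b₀).mul hinv).congr_fderiv ?_
  ext w
  simp only [neg_smul, smul_neg, Function.comp_apply, add_apply, neg_apply, smul_apply, sum_apply,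
    proj_apply, smul_eq_mul, Finset.mul_sum, softmax, div_eq_mul_inv, sub_apply]
  set S := ∑ c, Real.exp (x (σ c) * τ⁻¹) with hS_def
  have hsplit (b : B) : τ⁻¹ * (Real.exp (x (σ b₀) * τ⁻¹) * S⁻¹ * (Real.exp (x (σ b) * τ⁻¹) * S⁻¹) *
      (w (σ b₀) - w (σ b))) = τ⁻¹ * Real.exp (x (σ b₀) * τ⁻¹) * (S ^ 2)⁻¹ * w (σ b₀) *
        Real.exp (x (σ b) * τ⁻¹) - Real.exp (x (σ b₀) * τ⁻¹) *
          ((S ^ 2)⁻¹ * (Real.exp (x (σ b) * τ⁻¹) * (τ⁻¹ * w (σ b)))) := by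
    ring
  rw [Finset.sum_congr rfl fun b _ => hsplit b, Finset.sum_sub_distrib,
    ← Finset.mul_sum _ (fun b => Real.exp (x (σ b) * τ⁻¹)), ← hS_def]
  field_simp
  ring

lemma norm_fderiv_softmax_comp_le {τ δ : ℝ} (hτ : 0 < τ) (hδ : 0 < δ) (σ : B → ι)
    {x : ι → ℝ} {g : B} (hgap : ∀ b ≠ g, x (σ b) + δ ≤ x (σ g)) (b₀ : B) :
    ‖fderiv ℝ (fun x : ι → ℝ => softmax τ (fun b => x (σ b)) b₀) x‖ ≤ 2 * Fintype.card B / δ := by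
  have hproj (i : ι) : ‖(proj i : (ι → ℝ) →L[ℝ] ℝ)‖ ≤ 1 := norm_proj_le_one i
  have hterm (b : B) : ‖(softmax τ (fun b => x (σ b)) b₀ * softmax τ (fun b => x (σ b)) b) •
      ((proj (σ b₀) : (ι → ℝ) →L[ℝ] ℝ) - proj (σ b))‖ ≤ τ / δ * 2 := by
    rcases eq_or_ne b₀ b with rfl | hb
    · simp only [sub_self, smul_zero, norm_zero]
      positivity
    rw [norm_smul, Real.norm_of_nonneg (mul_nonneg (softmax_nonneg ..) (softmax_nonneg ..))]
    exact mul_le_mul (softmax_mul_softmax_le_of_gap hτ hδ hgap hb)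
      ((norm_sub_le _ _).trans (by linarith [hproj (σ b₀), hproj (σ b)]))
      (norm_nonneg _) (by positivity)
  rw [(hasFDerivAt_softmax_comp τ σ x b₀).fderiv, norm_smul, Real.norm_of_nonneg (by positivity)]
  calc τ⁻¹ * ‖∑ b, _‖ ≤ τ⁻¹ * ∑ _b : B, τ / δ * 2 :=
        mul_le_mul_of_nonneg_left ((norm_sum_le _ _).trans (Finset.sum_le_sum fun b _ => hterm b))
          (by positivity)
    _ = 2 * Fintype.card B / δ := by
        rw [Finset.sum_const, Finset.card_univ, nsmul_eq_mul]
        field_simp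

end Softmax

section JointSoftmax

variable {ι : Type*} [Fintype ι] {A : ι → Type*} [∀ i, Fintype (A i)]

noncomputable def jointSoftmax (τ : ℝ) (q : (Σ i, A i) → ℝ) (a : ∀ i, A i) : ℝ :=
  ∏ i, softmax τ (fun b => q ⟨i, b⟩) (a i)

lemma norm_jointSoftmax_le_one (τ : ℝ) (q : (Σ i, A i) → ℝ) (a : ∀ i, A i) :
    ‖jointSoftmax τ q a‖ ≤ 1 := by
  rw [jointSoftmax, norm_prod]
  exact Finset.prod_le_one (fun _ _ => norm_nonneg _) fun _ _ => norm_softmax_le_one ..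

lemma differentiableAt_jointSoftmax (τ : ℝ) (q : (Σ i, A i) → ℝ) (a : ∀ i, A i) :
    DifferentiableAt ℝ (fun q' => jointSoftmax τ q' a) q := by
  classical
  exact (HasFDerivAt.finsetProd fun i _ =>
    hasFDerivAt_softmax_comp τ (Sigma.mk i) q (a i)).differentiableAt

lemma norm_fderiv_jointSoftmax_le {τ δ : ℝ} (hτ : 0 < τ) (hδ : 0 < δ) {q : (Σ i, A i) → ℝ}
    {g : ∀ i, A i} (hgap : ∀ i, ∀ b ≠ g i, q ⟨i, b⟩ + δ ≤ q ⟨i, g i⟩) (a : ∀ i, A i) :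
    ‖fderiv ℝ (fun q' => jointSoftmax τ q' a) q‖ ≤ ∑ i, 2 * Fintype.card (A i) / δ :=
  (norm_fderiv_finsetProd_le
      (fun i _ => (hasFDerivAt_softmax_comp τ (Sigma.mk i) q (a i)).differentiableAt)
      fun _ _ => norm_softmax_le_one ..).trans
    (Finset.sum_le_sum fun i _ => norm_fderiv_softmax_comp_le hτ hδ (Sigma.mk i) (hgap i) (a i))

end JointSoftmax

theorem grad_surrogateLoss_uniformly_bounded_general {N : ℕ} {A : Fin N → Type*}
    [∀ i, Fintype (A i)]
    (y : (∀ i, A i) → ℝ)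
    (Qtot : (∀ i, A i) → ((Σ i, A i) → ℝ) → ℝ)
    (hQ : ∀ a, ContDiff ℝ 1 (Qtot a))
    (K : Set ((Σ i, A i) → ℝ)) (hK : IsCompact K)
    (δ : ℝ) (hδ : 0 < δ)
    (hgap : ∀ q ∈ K, ∀ i : Fin N, ∃ gi : A i, ∀ b ≠ gi, q ⟨i, b⟩ + δ ≤ q ⟨i, gi⟩) :
    ∃ C : ℝ, ∀ τ ∈ Set.Ioc (0 : ℝ) 1, ∀ q ∈ K,
      ‖fderiv ℝ
        (fun q' : (Σ i, A i) → ℝ => ∑ a : ∀ i, A i,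
          (∏ i, softmax τ (fun b => q' ⟨i, b⟩) (a i)) * (y a - Qtot a q') ^ 2) q‖ ≤ C := by
  have hQdiff (a : ∀ i, A i) : Differentiable ℝ (Qtot a) := (hQ a).differentiable one_ne_zero
  obtain ⟨M, hM⟩ := hK.exists_bound_of_continuousOn_finite_family (f := fun a q => y a - Qtot a q)
    fun a => (continuous_const.sub (hQ a).continuous).continuousOn
  obtain ⟨M', hM'⟩ := hK.exists_bound_of_continuousOn_finite_family
    (f := fun a q => fderiv ℝ (Qtot a) q) fun a => ((hQ a).continuous_fderiv one_ne_zero).continuousOn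
  set Bμ := ∑ i, 2 * (Fintype.card (A i) : ℝ) / δ
  refine ⟨Fintype.card (∀ i, A i) * (2 * M * M' + M ^ 2 * Bμ), fun τ hτ q hq => ?_⟩
  choose g hg using hgap q hq
  change ‖fderiv ℝ (fun q' => ∑ a, jointSoftmax τ q' a * (y a - Qtot a q') ^ 2) q‖ ≤ _
  calc _ ≤ ∑ a, ‖fderiv ℝ (fun q' => jointSoftmax τ q' a * (y a - Qtot a q') ^ 2) q‖ :=
        norm_fderiv_sum_le fun a _ =>
          (differentiableAt_jointSoftmax τ q a).fun_mul (((hQdiff a q).const_sub _).pow 2)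
    _ ≤ ∑ _a : ∀ i, A i, (2 * M * M' + M ^ 2 * Bμ) :=
        Finset.sum_le_sum fun a _ => norm_fderiv_mul_const_sub_sq_le
          (differentiableAt_jointSoftmax τ q a) (hQdiff a q) (norm_jointSoftmax_le_one τ q a)
          (norm_fderiv_jointSoftmax_le hτ.1 hδ hg a) (hM a q hq) (hM' a q hq)
    _ = _ := by rw [Finset.sum_const, Finset.card_univ, nsmul_eq_mul]

/-- uniform Lipschitz-type bound used in Lemma 1: if on a compact set `K`
every `q ∈ K` has, for each agent, a strict maximizer with gap at least `δ > 0`, then the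
gradients of the softmax-weighted losses are uniformly bounded on `K` over small
temperatures: `sup_{τ ∈ (0,1]} sup_{q ∈ K} ‖∇L_τ(q)‖ < ∞`. -/
theorem grad_surrogateLoss_uniformly_bounded {N : ℕ} {A : Fin N → Type*}
    [∀ i, Fintype (A i)] [∀ i, Nonempty (A i)]
    (y : (∀ i, A i) → ℝ)
    (Qtot : (∀ i, A i) → ((Σ i, A i) → ℝ) → ℝ)
    (hQ : ∀ a, ContDiff ℝ 1 (Qtot a))
    (K : Set ((Σ i, A i) → ℝ)) (hK : IsCompact K)
    (δ : ℝ) (hδ : 0 < δ)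
    (hgap : ∀ q ∈ K, ∀ i : Fin N, ∃ gi : A i, ∀ b ≠ gi, q ⟨i, b⟩ + δ ≤ q ⟨i, gi⟩) :
    ∃ C : ℝ, ∀ τ ∈ Set.Ioc (0 : ℝ) 1, ∀ q ∈ K,
      ‖fderiv ℝ
        (fun q' : (Σ i, A i) → ℝ => ∑ a : ∀ i, A i,
          (∏ i, softmax τ (fun b => q' ⟨i, b⟩) (a i)) * (y a - Qtot a q') ^ 2) q‖ ≤ C :=
  grad_surrogateLoss_uniformly_bounded_general y Qtot hQ K hK δ hδ hgap
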